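/- arXiv:1912.11279 — 3 statements merged into one kernel-verified Lean document; each statement's English description precedes it below -/
import Mathlib

section
/- In the OFOM attack on MWU-with-averaging (MwuAvg), the first weight update assigns weight exactly 1 to the second malicious update and vanishing weight to all other parties: let θ₁, …, θ_n ∈ ℝ^d be benign updates with mean μ = (1/n)·Σᵢ θᵢ, fix a unit vector v ∈ ℝ^d, and for t > 0 set θ' = t·v, θᵐ₁ = μ + θ', θᵐ₂ = (n·μ + θᵐ₁)/(n+1), and let θₐ⁰ be the unweighted average of θ₁, …, θ_n, θᵐ₁, θᵐ₂. Then the updated weight exp(−‖θₐ⁰ − θᵐ₂‖₂) of the party submitting θᵐ₂ equals 1 for every t, while as t → ∞ the updated weight exp(−‖θₐ⁰ − θᵢ‖₂) of each benign party i tends to 0 and the updated weight exp(−‖θₐ⁰ − θᵐ₁‖₂) of the party submitting θᵐ₁ tends to 0. -/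
/-!
The second malicious update is the mean of the other `n + 1` updates, and adding a mean to the
data it averages does not move the mean: the unweighted aggregate is exactly `θᵐ₂`, so that
party is at distance `0`. Both this aggregate and `θᵐ₁` lie on the line `μ + ℝ v`, at parameters
`t / (n + 1)` and `t`, so the distances from the aggregate to every benign update and to `θᵐ₁`
grow linearly in `t` (the latter because `n ≥ 1`), and their weights `exp (-‖·‖)` vanish.
-/

open Filter Topology

theorem inv_add_one_smul_add_inv_smul {K V : Type*} [Field K] [AddCommGroup V] [Module K V]
    {k : K} (hk : k ≠ 0) (hk₁ : k + 1 ≠ 0) (s : V) :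
    (k + 1)⁻¹ • (s + k⁻¹ • s) = k⁻¹ • s := by
  nth_rw 1 [← one_smul K s]
  rw [← add_smul, smul_smul]
  congr 1
  field_simp

section Line

variable {E : Type*} [NormedAddCommGroup E] [NormedSpace ℝ E]

theorem tendsto_norm_add_smul_atTop (x : E) {w : E} (hw : w ≠ 0) :
    Tendsto (fun t : ℝ => ‖x + t • w‖) atTop atTop := by
  have hlow : Tendsto (fun t : ℝ => t * ‖w‖ - ‖x‖) atTop atTop :=
    tendsto_atTop_add_const_right _ _ (tendsto_id.atTop_mul_const (norm_pos_iff.mpr hw))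
  refine tendsto_atTop_mono' _ ?_ hlow
  filter_upwards [eventually_ge_atTop 0] with t ht
  have htri := norm_sub_le (x + t • w) x
  rw [add_sub_cancel_left, norm_smul, Real.norm_of_nonneg ht] at htri
  linarith

theorem tendsto_exp_neg_norm_add_smul_atTop (x : E) {w : E} (hw : w ≠ 0) :
    Tendsto (fun t : ℝ => Real.exp (-‖x + t • w‖)) atTop (𝓝 0) :=
  Real.tendsto_exp_neg_atTop_nhds_zero.comp (tendsto_norm_add_smul_atTop x hw)

end Line

/-- In the OFOM attack on MwuAvg, the first multiplicative weight update gives weight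
exactly 1 to the second malicious update `θᵐ₂`, while the weights of every benign party
and of the first malicious update tend to 0 as the attack magnitude `t → ∞`. -/
theorem ofom_mwuavg_weights
    (d n : ℕ) (hn : 1 ≤ n)
    (θ : Fin n → EuclideanSpace ℝ (Fin d))
    (μ : EuclideanSpace ℝ (Fin d)) (hμ : μ = ((n : ℝ))⁻¹ • ∑ i, θ i)
    (v : EuclideanSpace ℝ (Fin d)) (hv : ‖v‖ = 1)
    (θm₁ θm₂ θa₀ : ℝ → EuclideanSpace ℝ (Fin d))
    (h₁ : ∀ t : ℝ, θm₁ t = μ + t • v)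
    (h₂ : ∀ t : ℝ, θm₂ t = ((n + 1 : ℝ))⁻¹ • ((n : ℝ) • μ + θm₁ t))
    (h₀ : ∀ t : ℝ, θa₀ t = ((n + 2 : ℝ))⁻¹ • ((∑ i, θ i) + θm₁ t + θm₂ t)) :
    (∀ t : ℝ, 0 < t → Real.exp (-‖θa₀ t - θm₂ t‖) = 1) ∧
    (∀ i : Fin n,
      Tendsto (fun t : ℝ => Real.exp (-‖θa₀ t - θ i‖)) atTop (nhds 0)) ∧
    Tendsto (fun t : ℝ => Real.exp (-‖θa₀ t - θm₁ t‖)) atTop (nhds 0) := by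
  have hn₀ : (n : ℝ) ≠ 0 := Nat.cast_ne_zero.mpr (by omega)
  have hn₁ : (n : ℝ) + 1 ≠ 0 := by positivity
  have hv₀ : v ≠ 0 := norm_ne_zero_iff.mp (hv ▸ one_ne_zero)
  have hsum : ∑ i, θ i = (n : ℝ) • μ := by
    rw [hμ, smul_smul, mul_inv_cancel₀ hn₀, one_smul]
  have hm₂ : ∀ t : ℝ, θm₂ t = μ + t • ((n + 1 : ℝ)⁻¹ • v) := by
    intro t
    rw [h₂, h₁]
    match_scalars <;> field_simp
  have ha₀ : ∀ t : ℝ, θa₀ t = θm₂ t := by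
    intro t
    have hmean : θm₂ t = ((n : ℝ) + 1)⁻¹ • ((∑ i, θ i) + θm₁ t) := by rw [h₂, hsum]
    rw [h₀, hmean, show (n : ℝ) + 2 = (n + 1) + 1 by ring]
    exact inv_add_one_smul_add_inv_smul hn₁ (by positivity) _
  refine ⟨fun t _ => ?_, fun i => ?_, ?_⟩
  · rw [ha₀, sub_self, norm_zero, neg_zero, Real.exp_zero]
  · refine (tendsto_exp_neg_norm_add_smul_atTop (μ - θ i)
      (smul_ne_zero (inv_ne_zero hn₁) hv₀)).congr fun t => ?_
    rw [ha₀, hm₂, add_sub_right_comm]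
  · have hc : (n + 1 : ℝ)⁻¹ - 1 ≠ 0 := sub_ne_zero.mpr (inv_ne_one.mpr (by simpa using hn₀))
    refine (tendsto_exp_neg_norm_add_smul_atTop 0 (smul_ne_zero hc hv₀)).congr fun t => ?_
    rw [ha₀, hm₂, h₁, zero_add]
    congr 3
    module
end

section
/- The OFOM attack drives the MwuAvg aggregate arbitrarily far from the benign mean: let θ₁, …, θ_n ∈ ℝ^d be benign updates with mean μ = (1/n)·Σᵢ θᵢ, fix a unit vector v ∈ ℝ^d, and for t > 0 set θ' = t·v, θᵐ₁ = μ + θ', θᵐ₂ = (n·μ + θᵐ₁)/(n+1). Let θₐ⁰ be the unweighted average of θ₁, …, θ_n, θᵐ₁, θᵐ₂, assign each update θ the weight w(θ) = exp(−‖θₐ⁰ − θ‖₂), and let θₐ¹ = (Σ w(θ)·θ)/(Σ w(θ)) be the resulting weighted-average aggregate over all n + 2 updates. Then as t → ∞, ‖θₐ¹ − θᵐ₂‖₂ → 0 and ‖θₐ¹ − μ‖₂ → ∞. -/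
/-!
The second malicious update `θᵐ₂ = μ + t v / (n + 1)` coincides with the unweighted mean `θₐ⁰`,
so it receives weight `1`, while every other update lies at a distance from `θₐ⁰` that grows
linearly in `t`. An update at distance `r` pulls the weighted mean away from `θₐ⁰` by at most
`r e^{-r} → 0`, so `θₐ¹ - θᵐ₂ → 0`; since `‖θᵐ₂ - μ‖ = t / (n + 1)`, `θₐ¹` escapes from `μ`.
-/

open Filter Topology

variable {α ι E : Type*} [SeminormedAddCommGroup E]

theorem tendsto_norm_sub_atTop_of_tendsto_norm_sub_nhds_zero {l : Filter α} {f g : α → E} {a : E}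
    (hfg : Tendsto (fun t => ‖f t - g t‖) l (𝓝 0)) (hg : Tendsto (fun t => ‖g t - a‖) l atTop) :
    Tendsto (fun t => ‖f t - a‖) l atTop := by
  refine tendsto_atTop_mono (fun t => ?_) (hg.atTop_add (neg_zero (G := ℝ) ▸ hfg.neg))
  linarith [norm_sub_le_norm_sub_add_norm_sub (g t) (f t) a, norm_sub_rev (g t) (f t)]

theorem one_le_sum_exp_neg_norm_sub [Fintype ι] {p : E} {x : ι → E} (hp : p ∈ Set.range x) :
    1 ≤ ∑ i, Real.exp (-‖p - x i‖) := by
  obtain ⟨j, rfl⟩ := hp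
  calc (1 : ℝ) = Real.exp (-‖x j - x j‖) := by simp
    _ ≤ ∑ i, Real.exp (-‖x j - x i‖) :=
      Finset.single_le_sum (f := fun i => Real.exp (-‖x j - x i‖))
        (fun i _ => (Real.exp_pos _).le) (Finset.mem_univ j)

variable [NormedSpace ℝ E]

theorem tendsto_norm_add_smul_atTop_s8 {l : Filter α} {v : E} (hv : 0 < ‖v‖) (a : E) {f : α → ℝ}
    (hf : Tendsto (fun t => |f t|) l atTop) :
    Tendsto (fun t => ‖a + f t • v‖) l atTop := by
  refine tendsto_atTop_mono (fun t => ?_)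
    (tendsto_atTop_add_const_right l (-‖a‖) (hf.atTop_mul_const hv))
  have := norm_sub_le (a + f t • v) a
  rw [add_sub_cancel_left, norm_smul, Real.norm_eq_abs] at this
  linarith

/-- The MwuAvg aggregate of the updates `x` with weights computed from the reference point `p`;
`θₐ¹` is `mwuAggregate θₐ⁰` of all `n + 2` updates. -/
noncomputable def mwuAggregate [Fintype ι] (p : E) (x : ι → E) : E :=
  (∑ i, Real.exp (-‖p - x i‖))⁻¹ • ∑ i, Real.exp (-‖p - x i‖) • x i

section Aggregate

variable [Fintype ι] {p : E} {x : ι → E}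

theorem mwuAggregate_sub (hp : p ∈ Set.range x) :
    mwuAggregate p x - p =
      (∑ i, Real.exp (-‖p - x i‖))⁻¹ • ∑ i, Real.exp (-‖p - x i‖) • (x i - p) := by
  have hW : (∑ i, Real.exp (-‖p - x i‖)) ≠ 0 := by
    linarith [one_le_sum_exp_neg_norm_sub hp]
  simp only [mwuAggregate, smul_sub, Finset.sum_sub_distrib, ← Finset.sum_smul, smul_smul,
    inv_mul_cancel₀ hW, one_smul]

theorem norm_mwuAggregate_sub_le (hp : p ∈ Set.range x) :
    ‖mwuAggregate p x - p‖ ≤ ∑ i, ‖p - x i‖ * Real.exp (-‖p - x i‖) := by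
  have hW := one_le_sum_exp_neg_norm_sub hp
  rw [mwuAggregate_sub hp, norm_smul, Real.norm_of_nonneg (by positivity)]
  calc _ ≤ ‖∑ i, Real.exp (-‖p - x i‖) • (x i - p)‖ :=
        mul_le_of_le_one_left (norm_nonneg _) (inv_le_one_of_one_le₀ hW)
    _ ≤ ∑ i, ‖Real.exp (-‖p - x i‖) • (x i - p)‖ := norm_sum_le _ _
    _ = ∑ i, ‖p - x i‖ * Real.exp (-‖p - x i‖) := by
        simp only [norm_smul, Real.norm_of_nonneg (Real.exp_pos _).le, norm_sub_rev (x _) p,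
          mul_comm]

end Aggregate

theorem tendsto_norm_mwuAggregate_sub_nhds_zero [Fintype ι] {l : Filter α} {p : α → E}
    {x : α → ι → E} (hp : ∀ t, p t ∈ Set.range (x t))
    (hx : ∀ i, (∀ t, x t i = p t) ∨ Tendsto (fun t => ‖p t - x t i‖) l atTop) :
    Tendsto (fun t => ‖mwuAggregate (p t) (x t) - p t‖) l (𝓝 0) := by
  have hterm : ∀ i, Tendsto (fun t => ‖p t - x t i‖ * Real.exp (-‖p t - x t i‖)) l (𝓝 0) := by
    intro i
    rcases hx i with hi | hi
    · simpa [hi] using tendsto_const_nhds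
    · simpa [Function.comp_def] using (Real.tendsto_pow_mul_exp_neg_atTop_nhds_zero 1).comp hi
  refine squeeze_zero (fun t => norm_nonneg _) (fun t => norm_mwuAggregate_sub_le (hp t)) ?_
  simpa using tendsto_finsetSum Finset.univ fun i _ => hterm i

/-- The OFOM attack drives the MwuAvg aggregate arbitrarily far from the benign mean:
with weights `w(θ) = exp(−‖θa₀ − θ‖₂)` computed from the initial unweighted aggregate
`θa₀`, the resulting weighted-average aggregate `θa₁` converges to the second malicious
update `θᵐ₂` while its distance to the benign mean `μ` tends to infinity as `t → ∞`. -/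
theorem ofom_drives_mwuavg_aggregate_away
    (d n : ℕ) (hn : 1 ≤ n)
    (θ : Fin n → EuclideanSpace ℝ (Fin d))
    (μ : EuclideanSpace ℝ (Fin d)) (hμ : μ = ((n : ℝ))⁻¹ • ∑ i, θ i)
    (v : EuclideanSpace ℝ (Fin d)) (hv : ‖v‖ = 1)
    (θm₁ θm₂ θa₀ θa₁ : ℝ → EuclideanSpace ℝ (Fin d)) (W : ℝ → ℝ)
    (h₁ : ∀ t : ℝ, θm₁ t = μ + t • v)
    (h₂ : ∀ t : ℝ, θm₂ t = ((n + 1 : ℝ))⁻¹ • ((n : ℝ) • μ + θm₁ t))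
    (h₀ : ∀ t : ℝ, θa₀ t = ((n + 2 : ℝ))⁻¹ • ((∑ i, θ i) + θm₁ t + θm₂ t))
    (hW : ∀ t : ℝ, W t =
      (∑ i, Real.exp (-‖θa₀ t - θ i‖)) +
        Real.exp (-‖θa₀ t - θm₁ t‖) + Real.exp (-‖θa₀ t - θm₂ t‖))
    (hA : ∀ t : ℝ, θa₁ t = (W t)⁻¹ •
      ((∑ i, Real.exp (-‖θa₀ t - θ i‖) • θ i) +
        Real.exp (-‖θa₀ t - θm₁ t‖) • θm₁ t +
        Real.exp (-‖θa₀ t - θm₂ t‖) • θm₂ t)) :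
    Tendsto (fun t : ℝ => ‖θa₁ t - θm₂ t‖) atTop (nhds 0) ∧
    Tendsto (fun t : ℝ => ‖θa₁ t - μ‖) atTop atTop := by
  have hn1 : (1 : ℝ) ≤ n := by exact_mod_cast hn
  set c : ℝ := ((n : ℝ) + 1)⁻¹ with hc_def
  have hc : c ≠ 0 ∧ c ≠ 1 := ⟨by positivity, (inv_lt_one_of_one_lt₀ (by linarith)).ne⟩
  have hsum : ∑ i, θ i = (n : ℝ) • μ := by
    rw [hμ, smul_smul, mul_inv_cancel₀ (by positivity), one_smul]
  have hθm₂ : ∀ t, θm₂ t = μ + (c * t) • v := fun t => by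
    rw [h₂, h₁, hc_def]; match_scalars <;> field_simp
  have hθa₀ : ∀ t, θa₀ t = θm₂ t := fun t => by
    rw [h₀, h₁, hθm₂, hsum, hc_def]; match_scalars <;> field_simp <;> ring
  have hθa₁ : ∀ t, θa₁ t = mwuAggregate (θm₂ t) (Sum.elim θ ![θm₁ t, θm₂ t]) := fun t => by
    simp only [hA, hW, hθa₀, mwuAggregate, Fintype.sum_sum_type, Fin.sum_univ_two, Sum.elim_inl,
      Sum.elim_inr, Matrix.cons_val_zero, Matrix.cons_val_one, add_assoc]
  have hv0 : 0 < ‖v‖ := hv ▸ one_pos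
  have hlin : ∀ k : ℝ, k ≠ 0 → Tendsto (fun t : ℝ => |k * t|) atTop atTop := fun k hk => by
    simpa only [abs_mul] using tendsto_abs_atTop_atTop.const_mul_atTop (abs_pos.2 hk)
  have hclose : Tendsto (fun t => ‖θa₁ t - θm₂ t‖) atTop (𝓝 0) := by
    simp_rw [hθa₁]
    refine tendsto_norm_mwuAggregate_sub_nhds_zero (fun t => ⟨Sum.inr 1, rfl⟩) ?_
    rintro (i | j)
    · right
      simpa [hθm₂, add_sub_right_comm] using
        tendsto_norm_add_smul_atTop_s8 hv0 (μ - θ i) (hlin c hc.1)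
    · fin_cases j
      · right
        have h : ∀ t, θm₂ t - θm₁ t = 0 + ((c - 1) * t) • v := fun t => by
          rw [hθm₂, h₁]; module
        simpa [h] using tendsto_norm_add_smul_atTop_s8 hv0 0 (hlin (c - 1) (sub_ne_zero.2 hc.2))
      · exact Or.inl fun t => rfl
  refine ⟨hclose, tendsto_norm_sub_atTop_of_tendsto_norm_sub_nhds_zero hclose ?_⟩
  simpa [hθm₂] using tendsto_norm_add_smul_atTop_s8 hv0 0 (hlin c hc.1)
end

section
/- Bounded empirical variance in every direction implies the sample mean is close to the mean of every large subset (the correctness principle behind the spectral filtering stopping condition λ* ≤ 9 in the Cronus robust aggregation): let S be a finite nonempty multiset of vectors in ℝ^d with mean μ_S = (1/|S|)·Σ_{x∈S} x and empirical covariance Σ_S = (1/|S|)·Σ_{x∈S} (x − μ_S)(x − μ_S)ᵀ. Suppose the largest eigenvalue of Σ_S is at most λ. Then for every 0 ≤ ε < 1 and every sub-multiset T ⊆ S with |T| ≥ (1−ε)·|S|, the mean μ_T = (1/|T|)·Σ_{x∈T} x satisfies ‖μ_T − μ_S‖₂ ≤ √(λ·ε)/(1−ε). -/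
/-!
Project onto the unit vector `v` pointing from `μS` to `μT`. The centred projections
`⟪x - μS, v⟫` sum to zero over `S`, so their sum over `T`, which is `|T| ‖μT - μS‖`, is minus
their sum over the at most `ε |S|` points of `S - T`. Cauchy–Schwarz on those points and the
variance bound `λ |S|` in direction `v` give `|T| ‖μT - μS‖ ≤ √(λ ε) |S|`, and
`|T| ≥ (1 - ε) |S|` finishes.
-/

open Multiset

theorem Multiset.sq_sum_le_card_mul_sum_sq (m : Multiset ℝ) :
    m.sum ^ 2 ≤ card m * (m.map (· ^ 2)).sum := by
  have h := _root_.sq_sum_le_card_mul_sum_sq (s := m.toEnumFinset) (f := Prod.fst)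
  rw [card_toEnumFinset, Finset.sum_eq_multiset_sum, map_toEnumFinset_fst,
    Finset.sum_eq_multiset_sum] at h
  have hsq : m.toEnumFinset.val.map (fun i => i.1 ^ 2) = m.map (· ^ 2) := by
    conv_rhs => rw [← map_toEnumFinset_fst m, map_map]
    rfl
  rwa [hsq] at h

theorem Multiset.sq_sum_map_le_of_sum_map_eq_zero {α : Type*} {S T : Multiset α} (hTS : T ≤ S)
    {f : α → ℝ} (hf : (S.map f).sum = 0) :
    (T.map f).sum ^ 2 ≤ (card S - card T : ℝ) * (S.map (f · ^ 2)).sum := by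
  obtain ⟨R, rfl⟩ := le_iff_exists_add.1 hTS
  simp only [map_add, sum_add, card_add, Nat.cast_add] at hf ⊢
  have hR := (R.map f).sq_sum_le_card_mul_sum_sq
  rw [card_map, map_map] at hR
  have hTsq : 0 ≤ (T.map (f · ^ 2)).sum := sum_nonneg fun _ hx => by
    obtain ⟨y, -, rfl⟩ := mem_map.1 hx; positivity
  calc (T.map f).sum ^ 2 = (R.map f).sum ^ 2 := by rw [eq_neg_of_add_eq_zero_left hf, neg_sq]
    _ ≤ card R * (R.map (f · ^ 2)).sum := hR
    _ ≤ card R * ((T.map (f · ^ 2)).sum + (R.map (f · ^ 2)).sum) := by gcongr; linarith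
    _ = _ := by ring

theorem Multiset.abs_sum_map_le_sqrt_mul_card {α : Type*} {S T : Multiset α} (hTS : T ≤ S)
    {f : α → ℝ} (hf : (S.map f).sum = 0) {lam ε : ℝ}
    (hvar : (S.map (f · ^ 2)).sum ≤ lam * card S)
    (hT : (1 - ε) * card S ≤ card T) :
    |(T.map f).sum| ≤ √(lam * ε) * card S := by
  have hsq : 0 ≤ (S.map (f · ^ 2)).sum := sum_nonneg fun _ hx => by
    obtain ⟨y, -, rfl⟩ := mem_map.1 hx; positivity
  rw [← Real.sqrt_sq (Nat.cast_nonneg (card S)), ← Real.sqrt_mul' _ (sq_nonneg _)]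
  refine Real.abs_le_sqrt ((sq_sum_map_le_of_sum_map_eq_zero hTS hf).trans ?_)
  calc (card S - card T : ℝ) * (S.map (f · ^ 2)).sum ≤ (ε * card S) * (lam * card S) := by
        have : (card T : ℝ) ≤ card S := by exact_mod_cast card_le_card hTS
        gcongr <;> linarith
    _ = lam * ε * card S ^ 2 := by ring

section InnerProductSpace

variable {E : Type*} [SeminormedAddCommGroup E] [InnerProductSpace ℝ E]

theorem Multiset.sum_map_inner_sub (U : Multiset E) (c v : E) :
    (U.map fun x => inner ℝ (x - c) v).sum = inner ℝ (U.sum - (card U : ℝ) • c) v := by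
  induction U using Multiset.induction_on with
  | empty => simp
  | cons a U ih =>
    simp only [map_cons, sum_cons, card_cons, Nat.cast_succ, ih, add_smul, one_smul]
    rw [← inner_add_left]
    congr 1
    abel

theorem Multiset.sum_map_inner_sub_eq_card_mul {U : Multiset E} {μ : E}
    (hμ : μ = (card U : ℝ)⁻¹ • U.sum) (hU : (card U : ℝ) ≠ 0) (c v : E) :
    (U.map fun x => inner ℝ (x - c) v).sum = card U * inner ℝ (μ - c) v := by
  rw [sum_map_inner_sub, ← real_inner_smul_left, smul_sub, hμ, smul_inv_smul₀ hU]

end InnerProductSpace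

theorem bounded_variance_subset_mean_close_general
    (d : ℕ) (S : Multiset (EuclideanSpace ℝ (Fin d))) (hS : S ≠ 0)
    (μS : EuclideanSpace ℝ (Fin d))
    (hμS : μS = ((Multiset.card S : ℝ))⁻¹ • S.sum)
    (lam : ℝ)
    (hcov : ∀ v : EuclideanSpace ℝ (Fin d), ‖v‖ = 1 →
      ((Multiset.card S : ℝ))⁻¹ *
        (S.map (fun x => (inner ℝ (x - μS) v : ℝ) ^ 2)).sum ≤ lam)
    (ε : ℝ) (hε1 : ε < 1)
    (T : Multiset (EuclideanSpace ℝ (Fin d))) (hTS : T ≤ S)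
    (hTcard : (1 - ε) * (Multiset.card S : ℝ) ≤ (Multiset.card T : ℝ))
    (μT : EuclideanSpace ℝ (Fin d))
    (hμT : μT = ((Multiset.card T : ℝ))⁻¹ • T.sum) :
    ‖μT - μS‖ ≤ Real.sqrt (lam * ε) / (1 - ε) := by
  have hε : 0 < 1 - ε := by linarith
  have hS_pos : (0 : ℝ) < card S := by exact_mod_cast card_pos.2 hS
  have hT_pos : (0 : ℝ) < card T := (mul_pos hε hS_pos).trans_le hTcard
  obtain hD | hD := eq_or_ne (μT - μS) 0
  · rw [hD, norm_zero]
    exact div_nonneg (Real.sqrt_nonneg _) hε.le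
  set v := ‖μT - μS‖⁻¹ • (μT - μS)
  have hv : inner ℝ (μT - μS) v = ‖μT - μS‖ := by
    rw [real_inner_smul_right, real_inner_self_eq_norm_sq]
    field_simp
  have hS_centered : (S.map fun x => inner ℝ (x - μS) v).sum = 0 := by
    rw [sum_map_inner_sub_eq_card_mul hμS hS_pos.ne', sub_self, inner_zero_left, mul_zero]
  have hT_sum : (T.map fun x => inner ℝ (x - μS) v).sum = card T * ‖μT - μS‖ := by
    rw [sum_map_inner_sub_eq_card_mul hμT hT_pos.ne', hv]
  have hvar : (S.map fun x => inner ℝ (x - μS) v ^ 2).sum ≤ lam * card S := by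
    rw [← inv_mul_le_iff₀' hS_pos]
    exact hcov v (norm_smul_inv_norm hD)
  have hT_bound := abs_sum_map_le_sqrt_mul_card hTS hS_centered hvar hTcard
  rw [hT_sum, abs_of_nonneg (by positivity)] at hT_bound
  rw [le_div_iff₀ hε]
  refine le_of_mul_le_mul_right ?_ hS_pos
  calc ‖μT - μS‖ * (1 - ε) * card S = (1 - ε) * card S * ‖μT - μS‖ := by ring
    _ ≤ card T * ‖μT - μS‖ := by gcongr
    _ ≤ √(lam * ε) * card S := hT_bound

/-- Bounded empirical variance in every direction implies the sample mean is close to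
the mean of every large sub-multiset: if the largest eigenvalue of the empirical
covariance of `S` is at most `lam` (equivalently, the empirical variance along every
unit direction is at most `lam`), then for every sub-multiset `T ⊆ S` with
`|T| ≥ (1−ε)·|S|`, the means satisfy `‖μ_T − μ_S‖₂ ≤ √(lam·ε)/(1−ε)`. -/
theorem bounded_variance_subset_mean_close
    (d : ℕ) (S : Multiset (EuclideanSpace ℝ (Fin d))) (hS : S ≠ 0)
    (μS : EuclideanSpace ℝ (Fin d))
    (hμS : μS = ((Multiset.card S : ℝ))⁻¹ • S.sum)
    (lam : ℝ)
    (hcov : ∀ v : EuclideanSpace ℝ (Fin d), ‖v‖ = 1 →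
      ((Multiset.card S : ℝ))⁻¹ *
        (S.map (fun x => (inner ℝ (x - μS) v : ℝ) ^ 2)).sum ≤ lam)
    (ε : ℝ) (hε0 : 0 ≤ ε) (hε1 : ε < 1)
    (T : Multiset (EuclideanSpace ℝ (Fin d))) (hTS : T ≤ S)
    (hTcard : (1 - ε) * (Multiset.card S : ℝ) ≤ (Multiset.card T : ℝ))
    (μT : EuclideanSpace ℝ (Fin d))
    (hμT : μT = ((Multiset.card T : ℝ))⁻¹ • T.sum) :
    ‖μT - μS‖ ≤ Real.sqrt (lam * ε) / (1 - ε) :=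
  bounded_variance_subset_mean_close_general d S hS μS hμS lam hcov ε hε1 T hTS hTcard μT hμT
end
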